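/- Let G be a finite simple graph on n vertices, let Ḡ be its complement, and let k be an integer with 1 ≤ k < n−1. Let L, L̄, and L_J denote the Laplacian matrices of F_k(G), F_k(Ḡ), and F_k(K_n) respectively (F_k(K_n) is the Johnson graph J(n,k)). Then there exists a basis v₁,…,v_N of ℝ^N, where N = C(n,k), and real numbers λᵢ, λ̄ᵢ for i = 1,…,N, such that for every i: L vᵢ = λᵢ vᵢ, L̄ vᵢ = λ̄ᵢ vᵢ, and L_J vᵢ = (λᵢ + λ̄ᵢ) vᵢ. In particular, every Laplacian eigenvalue of J(n,k) is the sum of one Laplacian eigenvalue of F_k(G) and one Laplacian eigenvalue of F_k(Ḡ), with each eigenvalue (counted with multiplicity) used exactly once. -/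

import Mathlib

open Finset Matrix
open scoped symmDiff

/-- The `k`-token graph of a graph `G`: vertices are the `k`-subsets of the vertex set,
two subsets `A`, `B` being adjacent iff their symmetric difference is a pair `{a, b}`
with `a ∈ A`, `b ∈ B` and `a` adjacent to `b` in `G`. -/
def tokenGraph {V : Type*} [DecidableEq V] (G : SimpleGraph V) (k : ℕ) :
    SimpleGraph {s : Finset V // s.card = k} where
  Adj A B := ∃ a b, a ∈ A.1 ∧ b ∈ B.1 ∧ G.Adj a b ∧ A.1 ∆ B.1 = {a, b}
  symm := by
    constructor
    rintro A B ⟨a, b, ha, hb, hab, hd⟩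
    exact ⟨b, a, hb, ha, hab.symm, by rw [symmDiff_comm, hd, Finset.pair_comm]⟩
  loopless := by
    constructor
    rintro A ⟨a, b, ha, hb, hab, hd⟩
    rw [symmDiff_self] at hd
    exact Finset.insert_ne_empty a {b} hd.symm

/-- The Laplacian matrix (over `ℝ`) of a finite simple graph: `L = D - A`. -/
noncomputable def Lap {V : Type*} [Fintype V] [DecidableEq V] (G : SimpleGraph V) :
    Matrix V V ℝ :=
  letI := Classical.decRel G.Adj
  G.lapMatrix ℝ


/-! Write `τ_ab` for the permutation of `k`-subsets induced by the transposition `(a b)` and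
`P_σ` for the permutation matrix of `σ`. A `k`-set `A` is moved by `τ_ab` exactly when exactly
one of `a`, `b` lies in `A`, and then `τ_ab A` is the neighbour of `A` in `F_k(H)` across the
edge `ab`; each such neighbour arises from the two orientations of that edge. Hence
`2 L(F_k(H)) = ∑_{H.Adj a b} (1 - P_{τ_ab})`.

Consequently `L(F_k(G)) + L(F_k(Ḡ)) = L(F_k(K_n))`, and since every permutation of the vertices
is an automorphism of `F_k(K_n)`, the Laplacian `L(F_k(K_n))` commutes with every `P_{τ_ab}`,
hence with `L(F_k(G))`. Two commuting symmetric matrices have a common eigenbasis. -/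

namespace Finset

variable {α : Type*} [DecidableEq α] {s : Finset α} {a b : α}

lemma map_symmDiff {β : Type*} [DecidableEq β] (f : α ↪ β) (s t : Finset α) :
    (s ∆ t).map f = s.map f ∆ t.map f := by
  simp only [map_eq_image, image_symmDiff _ _ f.injective]

lemma map_swap_eq_self (h : a ∈ s ↔ b ∈ s) : s.map (Equiv.swap a b).toEmbedding = s := by
  ext z
  rw [mem_map_equiv, Equiv.symm_swap]
  rcases eq_or_ne z a with rfl | hza
  · simp [h]
  rcases eq_or_ne z b with rfl | hzb
  · simp [h]
  · rw [Equiv.swap_apply_of_ne_of_ne hza hzb]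

lemma symmDiff_map_swap (ha : a ∈ s) (hb : b ∉ s) :
    s ∆ s.map (Equiv.swap a b).toEmbedding = {a, b} := by
  ext z
  rw [mem_symmDiff, mem_map_equiv, Equiv.symm_swap]
  rcases eq_or_ne z a with rfl | hza
  · simp [ha, hb]
  rcases eq_or_ne z b with rfl | hzb
  · simp [ha, hb]
  · simp [Equiv.swap_apply_of_ne_of_ne hza hzb, hza, hzb]

lemma mem_xor_of_map_swap_ne (h : s.map (Equiv.swap a b).toEmbedding ≠ s) :
    a ∈ s ∧ b ∉ s ∨ b ∈ s ∧ a ∉ s := by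
  contrapose! h
  exact map_swap_eq_self (by tauto)

end Finset

lemma Matrix.commute_permMatrix_of_submatrix_eq {n R : Type*} [Fintype n] [DecidableEq n]
    [NonAssocSemiring R] {M : Matrix n n R} {σ : Equiv.Perm n} (h : M.submatrix σ σ = M) :
    Commute M (σ.permMatrix R) := by
  rw [Commute, SemiconjBy, PEquiv.mul_toMatrix_toPEquiv, PEquiv.toMatrix_toPEquiv_mul]
  ext i j
  simpa using (congrFun (congrFun h i) (σ.symm j)).symm

open Module.End in
theorem LinearMap.IsSymmetric.exists_basis_eigenvectors_of_commute {𝕜 E : Type*} [RCLike 𝕜]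
    [NormedAddCommGroup E] [InnerProductSpace 𝕜 E] [FiniteDimensional 𝕜 E] {A B : E →ₗ[𝕜] E}
    (hA : A.IsSymmetric) (hB : B.IsSymmetric) (hAB : Commute A B) :
    ∃ (b : Module.Basis (Fin (Module.finrank 𝕜 E)) 𝕜 E) (μ ν : Fin (Module.finrank 𝕜 E) → 𝕜),
      ∀ i, A (b i) = μ i • b i ∧ B (b i) = ν i • b i := by
  have hint := hA.directSum_isInternal_of_commute hB hAB
  let b := hint.collectedBasis fun i : 𝕜 × 𝕜 =>
    Module.Basis.ofVectorSpace 𝕜 ↥(eigenspace A i.2 ⊓ eigenspace B i.1)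
  let e := b.indexEquiv (Module.finBasis 𝕜 E)
  refine ⟨b.reindex e, fun i => (e.symm i).1.2, fun i => (e.symm i).1.1, fun i => ?_⟩
  obtain ⟨hAi, hBi⟩ := Submodule.mem_inf.1 (hint.collectedBasis_mem _ (e.symm i))
  rw [Module.Basis.reindex_apply]
  exact ⟨mem_eigenspace_iff.1 hAi, mem_eigenspace_iff.1 hBi⟩

theorem Matrix.IsHermitian.exists_basis_eigenvectors_of_commute {𝕜 ι : Type*} [RCLike 𝕜]
    [Fintype ι] [DecidableEq ι] {M N : Matrix ι ι 𝕜} (hM : M.IsHermitian) (hN : N.IsHermitian)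
    (hMN : Commute M N) :
    ∃ (b : Module.Basis (Fin (Fintype.card ι)) 𝕜 (ι → 𝕜)) (μ ν : Fin (Fintype.card ι) → 𝕜),
      ∀ i, M *ᵥ b i = μ i • b i ∧ N *ᵥ b i = ν i • b i := by
  have hcomm : Commute (toEuclideanLin M) (toEuclideanLin N) := by
    rw [commute_iff_eq, Module.End.mul_eq_comp, Module.End.mul_eq_comp, ← toLpLin_mul_same,
      ← toLpLin_mul_same, hMN.eq]
  obtain ⟨b, μ, ν, hb⟩ := (isSymmetric_toEuclideanLin_iff.2 hM).exists_basis_eigenvectors_of_commute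
    (isSymmetric_toEuclideanLin_iff.2 hN) hcomm
  let e := finCongr (finrank_euclideanSpace (𝕜 := 𝕜) (ι := ι))
  refine ⟨(b.map (WithLp.linearEquiv 2 𝕜 (ι → 𝕜))).reindex e, μ ∘ e.symm, ν ∘ e.symm, fun i => ?_⟩
  obtain ⟨hMi, hNi⟩ := hb (e.symm i)
  simp only [Module.Basis.reindex_apply, Module.Basis.map_apply, Function.comp_apply]
  exact ⟨congrArg WithLp.ofLp hMi, congrArg WithLp.ofLp hNi⟩

section TokenEquiv

variable {V W : Type*}

def tokenEquiv (k : ℕ) (e : V ≃ W) :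
    {s : Finset V // s.card = k} ≃ {s : Finset W // s.card = k} :=
  e.finsetCongr.subtypeEquiv fun s => by simp

@[simp]
lemma coe_tokenEquiv_apply (k : ℕ) (e : V ≃ W) (A : {s : Finset V // s.card = k}) :
    (tokenEquiv k e A).1 = A.1.map e.toEmbedding := rfl

variable [DecidableEq V] [DecidableEq W] {G : SimpleGraph V} {G' : SimpleGraph W}

lemma SimpleGraph.Iso.tokenGraph_adj_tokenEquiv_iff (f : G ≃g G') {k : ℕ}
    {A B : {s : Finset V // s.card = k}} :
    (tokenGraph G' k).Adj (tokenEquiv k f.toEquiv A) (tokenEquiv k f.toEquiv B) ↔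
      (tokenGraph G k).Adj A B := by
  constructor
  · rintro ⟨a', b', ha', hb', hab', hd⟩
    obtain ⟨a, ha, rfl⟩ := Finset.mem_map.1 ha'
    obtain ⟨b, hb, rfl⟩ := Finset.mem_map.1 hb'
    refine ⟨a, b, ha, hb, f.map_adj_iff.1 hab', Finset.map_injective f.toEquiv.toEmbedding ?_⟩
    simpa [Finset.map_symmDiff] using hd
  · rintro ⟨a, b, ha, hb, hab, hd⟩
    refine ⟨f a, f b, Finset.mem_map_of_mem _ ha, Finset.mem_map_of_mem _ hb,
      f.map_adj_iff.2 hab, ?_⟩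
    rw [coe_tokenEquiv_apply, coe_tokenEquiv_apply, ← Finset.map_symmDiff, hd]
    simp

def SimpleGraph.Iso.tokenGraph (f : G ≃g G') (k : ℕ) : tokenGraph G k ≃g tokenGraph G' k where
  toEquiv := tokenEquiv k f.toEquiv
  map_rel_iff' := f.tokenGraph_adj_tokenEquiv_iff

end TokenEquiv

namespace SimpleGraph

variable {V W : Type*} [Fintype V] [DecidableEq V] {G : SimpleGraph V} [DecidableRel G.Adj]

lemma Iso.submatrix_lapMatrix [Fintype W] [DecidableEq W] {G' : SimpleGraph W} [DecidableRel G'.Adj]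
    (R : Type*) [AddGroupWithOne R] (f : G ≃g G') :
    (G'.lapMatrix R).submatrix f f = G.lapMatrix R := by
  ext i j
  simp [lapMatrix, degMatrix, Matrix.diagonal_apply, f.injective.eq_iff, f.map_adj_iff]

lemma Iso.commute_lapMatrix_permMatrix (R : Type*) [Ring R] (f : G ≃g G) :
    Commute (G.lapMatrix R) (Equiv.Perm.permMatrix R f.toEquiv) :=
  Matrix.commute_permMatrix_of_submatrix_eq (f.submatrix_lapMatrix R)

end SimpleGraph

section Lap

variable {V : Type*} [Fintype V] [DecidableEq V]

lemma lap_eq_lapMatrix (G : SimpleGraph V) [DecidableRel G.Adj] : Lap G = G.lapMatrix ℝ := by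
  unfold Lap
  congr

lemma isHermitian_Lap (G : SimpleGraph V) : (Lap G).IsHermitian := by
  classical
  rw [lap_eq_lapMatrix]
  exact G.isHermitian_lapMatrix ℝ

end Lap

section TokenSwap

variable {V : Type*} [DecidableEq V] {H : SimpleGraph V} {k : ℕ}
  {A B : {s : Finset V // s.card = k}} {a b : V}

lemma tokenGraph_adj_tokenEquiv_swap (hab : H.Adj a b) (ha : a ∈ A.1) (hb : b ∉ A.1) :
    (tokenGraph H k).Adj A (tokenEquiv k (Equiv.swap a b) A) :=
  ⟨a, b, ha, by simpa using ha, hab, by simpa using Finset.symmDiff_map_swap ha hb⟩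

lemma tokenGraph_adj_tokenEquiv_swap_of_ne (hab : H.Adj a b)
    (hne : tokenEquiv k (Equiv.swap a b) A ≠ A) :
    (tokenGraph H k).Adj A (tokenEquiv k (Equiv.swap a b) A) := by
  rcases Finset.mem_xor_of_map_swap_ne (Subtype.coe_ne_coe.2 hne) with ⟨ha, hb⟩ | ⟨hb, ha⟩
  · exact tokenGraph_adj_tokenEquiv_swap hab ha hb
  · rw [Equiv.swap_comm]
    exact tokenGraph_adj_tokenEquiv_swap hab.symm hb ha

lemma symmDiff_tokenEquiv_swap_of_ne (hne : tokenEquiv k (Equiv.swap a b) A ≠ A) :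
    A.1 ∆ (tokenEquiv k (Equiv.swap a b) A).1 = {a, b} := by
  rcases Finset.mem_xor_of_map_swap_ne (Subtype.coe_ne_coe.2 hne) with ⟨ha, hb⟩ | ⟨hb, ha⟩
  · exact Finset.symmDiff_map_swap ha hb
  · rw [Equiv.swap_comm, Finset.pair_comm]
    exact Finset.symmDiff_map_swap hb ha

variable [Fintype V] [DecidableRel H.Adj]

lemma card_filter_tokenEquiv_swap_eq_two (h : (tokenGraph H k).Adj A B) :
    #{p : V × V | H.Adj p.1 p.2 ∧ tokenEquiv k (Equiv.swap p.1 p.2) A = B} = 2 := by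
  have hAB : A ≠ B := h.ne
  obtain ⟨a, b, ha, hb, hab, hd⟩ := h
  have hbA : b ∉ A.1 := by
    have := hd ▸ Finset.mem_insert_of_mem (Finset.mem_singleton_self b)
    exact (Finset.mem_symmDiff.1 this).elim (fun h => absurd hb h.2) (·.2)
  have hswap : tokenEquiv k (Equiv.swap a b) A = B :=
    Subtype.ext (symmDiff_right_injective A.1 ((Finset.symmDiff_map_swap ha hbA).trans hd.symm))
  have hfilter : ({p : V × V | H.Adj p.1 p.2 ∧ tokenEquiv k (Equiv.swap p.1 p.2) A = B} :
      Finset (V × V)) = {(a, b), (b, a)} := by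
    ext ⟨c, d⟩
    simp only [Finset.mem_filter, Finset.mem_univ, true_and, Finset.mem_insert,
      Finset.mem_singleton, Prod.mk.injEq]
    constructor
    · rintro ⟨hcd, rfl⟩
      have hpair := (symmDiff_tokenEquiv_swap_of_ne (Ne.symm hAB)).symm.trans hd
      have hc : c ∈ ({a, b} : Finset V) := hpair ▸ Finset.mem_insert_self c {d}
      have hd : d ∈ ({a, b} : Finset V) :=
        hpair ▸ Finset.mem_insert_of_mem (Finset.mem_singleton_self d)
      simp only [Finset.mem_insert, Finset.mem_singleton] at hc hd
      have := hcd.ne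
      grind
    · rintro (⟨rfl, rfl⟩ | ⟨rfl, rfl⟩)
      · exact ⟨hab, hswap⟩
      · exact ⟨hab.symm, by rwa [Equiv.swap_comm]⟩
  rw [hfilter, Finset.card_pair (by simp [hab.ne])]

lemma sum_ite_adj_tokenEquiv_swap [DecidableRel (tokenGraph H k).Adj]
    (A : {s : Finset V // s.card = k}) (g : {s : Finset V // s.card = k} → ℝ) (hg : g A = 0) :
    ∑ p : V × V, (if H.Adj p.1 p.2 then g (tokenEquiv k (Equiv.swap p.1 p.2) A) else 0) =
      2 * ∑ B ∈ (tokenGraph H k).neighborFinset A, g B := by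
  have hfiber : ∀ B, #{p : V × V | H.Adj p.1 p.2 ∧ tokenEquiv k (Equiv.swap p.1 p.2) A = B} • g B =
      if (tokenGraph H k).Adj A B then 2 * g B else 0 := by
    intro B
    split_ifs with hAB
    · rw [card_filter_tokenEquiv_swap_eq_two hAB, nsmul_eq_mul, Nat.cast_ofNat]
    rcases eq_or_ne A B with rfl | hne
    · rw [hg, smul_zero]
    rw [Finset.card_eq_zero.2, zero_smul]
    refine Finset.filter_eq_empty_iff.2 fun p _ ⟨hp, hpB⟩ => hAB ?_
    exact hpB ▸ tokenGraph_adj_tokenEquiv_swap_of_ne hp (hpB ▸ hne.symm)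
  calc ∑ p : V × V, (if H.Adj p.1 p.2 then g (tokenEquiv k (Equiv.swap p.1 p.2) A) else 0)
      = ∑ B, #{p : V × V | H.Adj p.1 p.2 ∧ tokenEquiv k (Equiv.swap p.1 p.2) A = B} • g B := by
        rw [← Finset.sum_filter,
          ← Finset.sum_fiberwise' _ (fun p : V × V => tokenEquiv k (Equiv.swap p.1 p.2) A) g]
        simp only [Finset.sum_const, Finset.filter_filter]
    _ = 2 * ∑ B ∈ (tokenGraph H k).neighborFinset A, g B := by
        simp only [hfiber, Finset.mul_sum, ← Finset.sum_filter,
          SimpleGraph.neighborFinset_eq_filter]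

variable (H k)

lemma two_smul_lap_tokenGraph :
    (2 : ℝ) • Lap (tokenGraph H k) = ∑ p : V × V,
      if H.Adj p.1 p.2 then 1 - Equiv.Perm.permMatrix ℝ (tokenEquiv k (Equiv.swap p.1 p.2))
      else 0 := by
  classical
  rw [lap_eq_lapMatrix]
  refine Matrix.toLin'.injective (LinearMap.ext fun f => funext fun A => ?_)
  simp only [Matrix.toLin'_apply, Matrix.smul_mulVec, Matrix.sum_mulVec, Finset.sum_apply,
    Pi.smul_apply, SimpleGraph.lapMatrix_mulVec_apply, apply_ite (· *ᵥ f), Matrix.sub_mulVec,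
    Matrix.one_mulVec, Matrix.permMatrix_mulVec, Matrix.zero_mulVec,
    apply_ite (fun v : {s : Finset V // s.card = k} → ℝ => v A), Pi.sub_apply,
    Function.comp_apply, Pi.zero_apply]
  rw [sum_ite_adj_tokenEquiv_swap A (fun B => f A - f B) (sub_self _),
    Finset.sum_sub_distrib, Finset.sum_const, SimpleGraph.card_neighborFinset_eq_degree,
    nsmul_eq_mul, smul_eq_mul]

end TokenSwap

section TokenLaplacian

variable {V : Type*} [Fintype V] [DecidableEq V] {k : ℕ}

lemma commute_lap_tokenGraph_top_permMatrix (σ : Equiv.Perm V) :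
    Commute (Lap (tokenGraph (⊤ : SimpleGraph V) k))
      (Equiv.Perm.permMatrix ℝ (tokenEquiv k σ)) := by
  classical
  rw [lap_eq_lapMatrix]
  exact ((SimpleGraph.Iso.completeGraph σ).tokenGraph k).commute_lapMatrix_permMatrix ℝ

variable (k)

lemma commute_lap_tokenGraph_top (H : SimpleGraph V) :
    Commute (Lap (tokenGraph H k)) (Lap (tokenGraph (⊤ : SimpleGraph V) k)) := by
  classical
  have h2 : Commute ((2 : ℝ) • Lap (tokenGraph H k)) (Lap (tokenGraph ⊤ k)) := by
    rw [two_smul_lap_tokenGraph]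
    refine Commute.sum_left _ _ _ fun p _ => ?_
    split_ifs
    · exact (Commute.one_left _).sub_left (commute_lap_tokenGraph_top_permMatrix _).symm
    · exact Commute.zero_left _
  simpa [smul_smul] using h2.smul_left (2⁻¹ : ℝ)

lemma lap_tokenGraph_add_lap_tokenGraph_compl (G : SimpleGraph V) :
    Lap (tokenGraph G k) + Lap (tokenGraph Gᶜ k) = Lap (tokenGraph (⊤ : SimpleGraph V) k) := by
  classical
  refine smul_right_injective _ (two_ne_zero : (2 : ℝ) ≠ 0) ?_
  simp only [smul_add, two_smul_lap_tokenGraph, ← Finset.sum_add_distrib]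
  refine Finset.sum_congr rfl fun p _ => ?_
  by_cases hG : G.Adj p.1 p.2
  · simp [hG, hG.ne]
  · by_cases hp : p.1 = p.2 <;> simp [hG, hp]

end TokenLaplacian

theorem lap_token_compl_simultaneous_diag_general (n k : ℕ) (G : SimpleGraph (Fin n)) :
    ∃ (v : Fin (n.choose k) → {s : Finset (Fin n) // s.card = k} → ℝ)
      (lam lambar : Fin (n.choose k) → ℝ),
      LinearIndependent ℝ v ∧ Submodule.span ℝ (Set.range v) = ⊤ ∧
      ∀ i, Lap (tokenGraph G k) *ᵥ v i = lam i • v i ∧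
        Lap (tokenGraph Gᶜ k) *ᵥ v i = lambar i • v i ∧
        Lap (tokenGraph (⊤ : SimpleGraph (Fin n)) k) *ᵥ v i =
          (lam i + lambar i) • v i := by
  obtain ⟨b, μ, ν, hb⟩ := (isHermitian_Lap (tokenGraph G k)).exists_basis_eigenvectors_of_commute
    (isHermitian_Lap _) (commute_lap_tokenGraph_top k G)
  let e := finCongr (by simp : Fintype.card {s : Finset (Fin n) // s.card = k} = n.choose k)
  have hcompl : Lap (tokenGraph Gᶜ k) = Lap (tokenGraph ⊤ k) - Lap (tokenGraph G k) :=
    eq_sub_of_add_eq' (lap_tokenGraph_add_lap_tokenGraph_compl k G)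
  refine ⟨b.reindex e, μ ∘ e.symm, (ν - μ) ∘ e.symm, (b.reindex e).linearIndependent,
    (b.reindex e).span_eq, fun i => ?_⟩
  obtain ⟨hG, hT⟩ := hb (e.symm i)
  simp only [Module.Basis.reindex_apply, Function.comp_apply, Pi.sub_apply]
  refine ⟨hG, ?_, ?_⟩
  · rw [hcompl, Matrix.sub_mulVec, hG, hT, sub_smul]
  · rwa [add_sub_cancel]

/-- For `1 ≤ k < n - 1`, there is a basis of `ℝ^N`, `N = C(n,k)`,
consisting of common eigenvectors of the Laplacians `L`, `L̄`, `L_J` of `F_k(G)`,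
`F_k(Ḡ)` and `F_k(K_n) = J(n,k)`, such that the corresponding eigenvalues satisfy
`λ_J = λ + λ̄` for each basis vector. -/
theorem lap_token_compl_simultaneous_diag (n k : ℕ) (hk1 : 1 ≤ k) (hk2 : k < n - 1)
    (G : SimpleGraph (Fin n)) :
    ∃ (v : Fin (n.choose k) → {s : Finset (Fin n) // s.card = k} → ℝ)
      (lam lambar : Fin (n.choose k) → ℝ),
      LinearIndependent ℝ v ∧ Submodule.span ℝ (Set.range v) = ⊤ ∧
      ∀ i, Lap (tokenGraph G k) *ᵥ v i = lam i • v i ∧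
        Lap (tokenGraph Gᶜ k) *ᵥ v i = lambar i • v i ∧
        Lap (tokenGraph (⊤ : SimpleGraph (Fin n)) k) *ᵥ v i =
          (lam i + lambar i) • v i :=
  lap_token_compl_simultaneous_diag_general n k G
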